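/- arXiv:2506.06985 — 2 statements merged into one kernel-verified Lean document; each statement's English description precedes it below -/
import Mathlib

section
/- Let ε ≥ 0. The function r ↦ Q(ε/r − r/2) − e^ε Q(ε/r + r/2) is nondecreasing on (0, ∞). Consequently, for any d ≥ 1, σ > 0, D > 0, and any μ_1, μ_2 ∈ ℝ^d with 0 < ‖μ_1 − μ_2‖ ≤ D, the hockey-stick divergence satisfies E_ε( N(μ_1, σ² I_d) ‖ N(μ_2, σ² I_d) ) ≤ θ_ε(D/σ), where θ_ε(r) := Q(ε/r − r/2) − e^ε Q(ε/r + r/2). -/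
open MeasureTheory Real Finset ENNReal

noncomputable section

abbrev E (d : ℕ) := EuclideanSpace ℝ (Fin d)

/-- Norm clipping operator `Π_C(x) = x ⬝ min(C/‖x‖, 1)`. -/
def clip {d : ℕ} (C : ℝ) (x : E d) : E d := (min (C / ‖x‖) 1) • x

/-- Gaussian measure `N(m, v I_d)` on `ℝ^d` (with variance `v`), via its density. -/
def gaussian (d : ℕ) (m : E d) (v : ℝ) : Measure (E d) :=
  volume.withDensity fun x =>
    ENNReal.ofReal ((2 * Real.pi * v) ^ (-(d : ℝ) / 2) * Real.exp (-‖x - m‖ ^ 2 / (2 * v)))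

/-- Rényi divergence of order `q`. -/
def renyiDiv {d : ℕ} (q : ℝ) (μ ν : Measure (E d)) : ℝ :=
  (q - 1)⁻¹ * Real.log (∫ x, ((μ.rnDeriv ν x).toReal) ^ q ∂ν)

/-- Hockey-stick divergence `E_ε(μ‖ν) = sup_A (μ(A) − e^ε ν(A))`. -/
def hockeyStick {d : ℕ} (ε : ℝ) (μ ν : Measure (E d)) : ℝ :=
  ⨆ A : {s : Set (E d) // MeasurableSet s},
    ((μ A.1).toReal - Real.exp ε * (ν A.1).toReal)

/-- `∞`-Wasserstein distance. -/
def wInfty {d : ℕ} (μ ν : Measure (E d)) : ℝ≥0∞ :=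
  ⨅ (ω : Measure (E d × E d)) (_ : ω.map Prod.fst = μ) (_ : ω.map Prod.snd = ν),
    essSup (fun p => edist p.1 p.2) ω

/-- Shifted Rényi divergence `D_q^{(z)}(μ‖ν)`. -/
def shiftedRenyi {d : ℕ} (q z : ℝ) (μ ν : Measure (E d)) : ℝ :=
  sInf ((fun μ' => renyiDiv q μ' ν) ''
    {μ' : Measure (E d) | IsProbabilityMeasure μ' ∧ wInfty μ' μ ≤ ENNReal.ofReal z})

/-- Law of the iterates `x_{t+1} = ψ_t(x_t) + ξ_t`, `ξ_t ~ N(0, v_t I_d)`, with `x_0 ~ μ0`. -/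
def lawSeq {d : ℕ} (ψ : ℕ → E d → E d) (v : ℕ → ℝ) (μ0 : Measure (E d)) : ℕ → Measure (E d)
  | 0 => μ0
  | t + 1 => (lawSeq ψ v μ0 t).bind fun x => gaussian d (ψ t x) (v t)

/-- Standard Gaussian tail function `Q`. -/
def gaussQ (t : ℝ) : ℝ := (Real.sqrt (2 * Real.pi))⁻¹ * ∫ u in Set.Ioi t, Real.exp (-u ^ 2 / 2)

/-- Amplification factor `θ_ε(r) = Q(ε/r − r/2) − e^ε Q(ε/r + r/2)`. -/
def theta (ε r : ℝ) : ℝ := gaussQ (ε / r - r / 2) - Real.exp ε * gaussQ (ε / r + r / 2)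

section Helpers

lemma integrable_gauss_kernel {v : ℝ} (hv : 0 < v) :
    Integrable (fun u : ℝ => Real.exp (-u ^ 2 / (2 * v))) := by
  have : (fun u : ℝ => Real.exp (-u ^ 2 / (2 * v)))
      = fun u : ℝ => Real.exp (-((2*v)⁻¹) * u ^ 2) := by
    funext u; ring_nf
  rw [this]
  exact integrable_exp_neg_mul_sq (by positivity)

lemma integrable_std_gauss : Integrable (fun u : ℝ => Real.exp (-u ^ 2 / 2)) := by
  have := integrable_gauss_kernel (v := 1) one_pos
  simpa using this

lemma gaussQ_eq (t : ℝ) :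
    gaussQ t = (Real.sqrt (2 * Real.pi))⁻¹ *
      ((∫ u : ℝ, Real.exp (-u ^ 2 / 2)) - (∫ u in Set.Iic 0, Real.exp (-u ^ 2 / 2))
        - ∫ u in (0:ℝ)..t, Real.exp (-u ^ 2 / 2)) := by
  have h1 : (∫ u in Set.Iic t, Real.exp (-u ^ 2 / 2)) + (∫ u in Set.Ioi t, Real.exp (-u ^ 2 / 2))
      = ∫ u : ℝ, Real.exp (-u ^ 2 / 2) := by
    have := integral_add_compl (measurableSet_Iic (a := t)) integrable_std_gauss
    simpa [Set.compl_Iic] using this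
  have h2 : (∫ u in (0:ℝ)..t, Real.exp (-u ^ 2 / 2))
      = (∫ u in Set.Iic t, Real.exp (-u ^ 2 / 2)) - ∫ u in Set.Iic 0, Real.exp (-u ^ 2 / 2) :=
    (intervalIntegral.integral_Iic_sub_Iic integrable_std_gauss.integrableOn
      integrable_std_gauss.integrableOn).symm
  rw [gaussQ]
  rw [h2]
  have : (∫ u in Set.Ioi t, Real.exp (-u ^ 2 / 2))
      = (∫ u : ℝ, Real.exp (-u ^ 2 / 2)) - ∫ u in Set.Iic t, Real.exp (-u ^ 2 / 2) := by
    linarith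
  rw [this]; ring

lemma hasDerivAt_gaussQ (t : ℝ) :
    HasDerivAt gaussQ (-((Real.sqrt (2 * Real.pi))⁻¹ * Real.exp (-t ^ 2 / 2))) t := by
  have hF : HasDerivAt (fun s => ∫ u in (0:ℝ)..s, Real.exp (-u ^ 2 / 2))
      (Real.exp (-t ^ 2 / 2)) t := by
    refine intervalIntegral.integral_hasDerivAt_right
      integrable_std_gauss.intervalIntegrable ?_ ?_
    · exact (Real.continuous_exp.comp (by continuity)).stronglyMeasurableAtFilter _ _
    · exact (Real.continuous_exp.comp (by continuity)).continuousAt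
  have h : HasDerivAt (fun s => (Real.sqrt (2 * Real.pi))⁻¹ *
      ((∫ u : ℝ, Real.exp (-u ^ 2 / 2)) - (∫ u in Set.Iic 0, Real.exp (-u ^ 2 / 2))
        - ∫ u in (0:ℝ)..s, Real.exp (-u ^ 2 / 2)))
      (-((Real.sqrt (2 * Real.pi))⁻¹ * Real.exp (-t ^ 2 / 2))) t := by
    have := ((hasDerivAt_const t ((∫ u : ℝ, Real.exp (-u ^ 2 / 2)) - ∫ u in Set.Iic 0, Real.exp (-u ^ 2 / 2))).sub hF).const_mul (Real.sqrt (2 * Real.pi))⁻¹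
    exact this.congr_deriv (by ring)
  refine h.congr_of_eventuallyEq ?_
  filter_upwards with s using (gaussQ_eq s)

lemma hasDerivAt_theta (ε : ℝ) {r : ℝ} (hr : 0 < r) :
    HasDerivAt (fun r => theta ε r)
      ((Real.sqrt (2 * Real.pi))⁻¹ * Real.exp (-(ε / r - r / 2) ^ 2 / 2)) r := by
  have ha : HasDerivAt (fun r : ℝ => ε / r - r / 2) (-ε / r ^ 2 - 1 / 2) r := by
    have h1 : HasDerivAt (fun r : ℝ => ε / r) (-ε / r ^ 2) r := by
      have := (hasDerivAt_inv hr.ne').const_mul ε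
      simpa [div_eq_mul_inv, neg_div, mul_comm] using this
    exact (h1.sub ((hasDerivAt_id r).div_const 2)).congr_deriv (by ring)
  have hb : HasDerivAt (fun r : ℝ => ε / r + r / 2) (-ε / r ^ 2 + 1 / 2) r := by
    have h1 : HasDerivAt (fun r : ℝ => ε / r) (-ε / r ^ 2) r := by
      have := (hasDerivAt_inv hr.ne').const_mul ε
      simpa [div_eq_mul_inv, neg_div, mul_comm] using this
    exact (h1.add ((hasDerivAt_id r).div_const 2)).congr_deriv (by ring)
  have hQa := (hasDerivAt_gaussQ (ε / r - r / 2)).comp r ha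
  have hQb := ((hasDerivAt_gaussQ (ε / r + r / 2)).comp r hb).const_mul (Real.exp ε)
  have key : Real.exp ε * Real.exp (-(ε / r + r / 2) ^ 2 / 2)
      = Real.exp (-(ε / r - r / 2) ^ 2 / 2) := by
    rw [← Real.exp_add]
    congr 1
    field_simp
    ring
  have := hQa.sub hQb
  exact this.congr_deriv (by
    linear_combination ((1 / 2 - ε / r ^ 2) * (Real.sqrt (2 * Real.pi))⁻¹) * key)

lemma theta_monotone (ε : ℝ) : MonotoneOn (fun r => theta ε r) (Set.Ioi (0:ℝ)) := by
  have : StrictMonoOn (fun r => theta ε r) (Set.Ioi (0:ℝ)) := by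
    refine strictMonoOn_of_deriv_pos (convex_Ioi 0) ?_ ?_
    · intro x hx
      exact ((hasDerivAt_theta ε hx).continuousAt).continuousWithinAt
    · intro x hx
      rw [interior_Ioi] at hx
      rw [(hasDerivAt_theta ε hx).deriv]
      positivity
  exact this.monotoneOn


lemma euclid_norm_sq {d : ℕ} (z : EuclideanSpace ℝ (Fin d)) : ‖z‖ ^ 2 = ∑ i, z i ^ 2 := by
  rw [EuclideanSpace.norm_eq, Real.sq_sqrt (by positivity)]
  simp [Real.norm_eq_abs, sq_abs]

lemma exp_sum_sq {m : ℕ} (v : ℝ) (w : Fin m → ℝ) :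
    Real.exp (-(∑ i, w i ^ 2) / (2*v)) = ∏ i, Real.exp (-(w i ^ 2) / (2*v)) := by
  rw [← Real.exp_sum]
  congr 1
  rw [← Finset.sum_div, ← Finset.sum_neg_distrib]

lemma integrable_gauss_E (d : ℕ) {v : ℝ} (hv : 0 < v) :
    Integrable (fun x : E d => Real.exp (-‖x‖ ^ 2 / (2 * v))) := by
  have mp := (EuclideanSpace.volume_preserving_symm_measurableEquiv_toLp (ι := Fin d)).symm
  rw [← mp.integrable_comp_emb (MeasurableEquiv.measurableEmbedding _)]
  have : (fun x : E d => Real.exp (-‖x‖ ^ 2 / (2*v))) ∘ (MeasurableEquiv.toLp 2 (Fin d → ℝ)).symm.symm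
      = fun w : Fin d → ℝ => ∏ i, Real.exp (-(w i ^ 2) / (2*v)) := by
    funext w
    simp only [Function.comp_apply]
    rw [euclid_norm_sq, ← exp_sum_sq]
    rfl
  rw [this]
  exact Integrable.fintype_prod (fun _ => integrable_gauss_kernel hv)

lemma integral_gauss_inner (n : ℕ) {v : ℝ} (hv : 0 < v)
    (b : OrthonormalBasis (Fin (n+1)) ℝ (E (n+1))) (h : ℝ → ℝ) :
    ∫ x : E (n+1), Real.exp (-‖x‖ ^ 2 / (2 * v)) * h (inner ℝ x (b 0) : ℝ)
      = (∫ t : ℝ, Real.exp (-t ^ 2 / (2 * v))) ^ n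
        * ∫ t : ℝ, Real.exp (-t ^ 2 / (2 * v)) * h t := by
  have step1 : ∫ x : E (n+1), Real.exp (-‖x‖ ^ 2 / (2 * v)) * h (inner ℝ x (b 0) : ℝ)
      = ∫ z : EuclideanSpace ℝ (Fin (n+1)),
          Real.exp (-‖z‖ ^ 2 / (2 * v)) * h (z 0) := by
    rw [← (b.measurePreserving_measurableEquiv.symm).integral_comp'
      (fun x : E (n+1) => Real.exp (-‖x‖ ^ 2 / (2 * v)) * h (inner ℝ x (b 0) : ℝ))]
    refine integral_congr_ae (Filter.Eventually.of_forall fun z => ?_)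
    dsimp only
    have hco : (b.measurableEquiv.symm z : E (n+1)) = b.repr.symm z := rfl
    rw [hco, b.repr.symm.norm_map]
    congr 2
    have : b 0 = b.repr.symm (EuclideanSpace.single 0 1) := (b.repr_symm_single 0).symm
    rw [this, b.repr.symm.inner_map_map, EuclideanSpace.inner_single_right]
    simp
  rw [step1]
  have step2 : ∫ z : EuclideanSpace ℝ (Fin (n+1)), Real.exp (-‖z‖ ^ 2 / (2 * v)) * h (z 0)
      = ∫ w : Fin (n+1) → ℝ, ∏ i,
          (Real.exp (-(w i ^ 2) / (2*v)) * (if i = 0 then h (w i) else 1)) := by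
    rw [← ((EuclideanSpace.volume_preserving_symm_measurableEquiv_toLp (ι := Fin (n+1))).symm
        (MeasurableEquiv.toLp 2 (Fin (n+1) → ℝ)).symm).integral_comp'
      (fun z : EuclideanSpace ℝ (Fin (n+1)) => Real.exp (-‖z‖ ^ 2 / (2 * v)) * h (z 0))]
    refine integral_congr_ae (Filter.Eventually.of_forall fun w => ?_)
    dsimp only
    have hco : ∀ i, ((MeasurableEquiv.toLp 2 (Fin (n+1) → ℝ)).symm.symm w : E (n+1)) i = w i := by
      intro i; rfl
    rw [Finset.prod_mul_distrib, Finset.prod_ite_eq' Finset.univ 0 (fun i => h (w i))]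
    simp only [Finset.mem_univ, if_true]
    rw [← exp_sum_sq, euclid_norm_sq]
    simp_rw [hco]
  rw [step2, MeasureTheory.volume_pi, MeasureTheory.integral_fintype_prod_eq_prod
    (f := fun i t => Real.exp (-(t ^ 2) / (2*v)) * (if i = 0 then h t else 1))]
  rw [Fin.prod_univ_succ]
  simp only [if_true, Fin.succ_ne_zero, if_false, mul_one]
  rw [Finset.prod_const, Finset.card_univ, Fintype.card_fin]
  ring_nf
  rw [mul_comm]
  simp_rw [mul_comm v⁻¹]

lemma integral_Ioi_gauss {σ : ℝ} (hσ : 0 < σ) (a : ℝ) :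
    ∫ t in Set.Ioi a, Real.exp (-t ^ 2 / (2 * σ ^ 2))
      = σ * (Real.sqrt (2 * Real.pi) * gaussQ (a / σ)) := by
  have h1 : ∀ t : ℝ, Real.exp (-t ^ 2 / (2 * σ ^ 2))
      = (fun u => Real.exp (-u ^ 2 / 2)) (σ⁻¹ * t) := by
    intro t
    simp only
    have harg : -t ^ 2 / (2 * σ ^ 2) = -(σ⁻¹ * t) ^ 2 / 2 := by
      rw [div_eq_div_iff (by positivity) (by norm_num), mul_pow, inv_pow]
      field_simp
    rw [harg]
  calc ∫ t in Set.Ioi a, Real.exp (-t ^ 2 / (2 * σ ^ 2))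
      = ∫ t in Set.Ioi a, (fun u => Real.exp (-u ^ 2 / 2)) (σ⁻¹ * t) := by simp_rw [h1]
    _ = (σ⁻¹)⁻¹ • ∫ u in Set.Ioi (σ⁻¹ * a), Real.exp (-u ^ 2 / 2) :=
        integral_comp_mul_left_Ioi (fun u => Real.exp (-u ^ 2 / 2)) a (inv_pos.mpr hσ)
    _ = σ * (Real.sqrt (2 * Real.pi) * gaussQ (a / σ)) := by
        rw [inv_inv, smul_eq_mul, gaussQ]
        rw [← mul_assoc (Real.sqrt (2 * Real.pi)), mul_inv_cancel₀
          (Real.sqrt_ne_zero'.mpr (by positivity)), one_mul, inv_mul_eq_div]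

lemma one_dim_integral (ε : ℝ) (hε : 0 ≤ ε) {σ c : ℝ} (hσ : 0 < σ) (hc : 0 < c) :
    ∫ t : ℝ, Real.exp (-t ^ 2 / (2 * σ ^ 2)) *
        max (Real.exp ((2 * c * t - c ^ 2) / (2 * σ ^ 2)) - Real.exp ε) 0
      = σ * Real.sqrt (2 * Real.pi) * theta ε (c / σ) := by
  set v : ℝ := σ ^ 2 with hvdef
  have hv : 0 < v := by positivity
  set b0 : ℝ := v * ε / c + c / 2 with hb0def
  set W : ℝ → ℝ := fun t =>
    Real.exp (-(t - c) ^ 2 / (2 * v)) - Real.exp ε * Real.exp (-t ^ 2 / (2 * v)) with hWdef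
  have hpt : ∀ t : ℝ, Real.exp (-t ^ 2 / (2 * v)) *
      max (Real.exp ((2 * c * t - c ^ 2) / (2 * v)) - Real.exp ε) 0
      = (Set.Ioi b0).indicator W t := by
    intro t
    have hk : (0:ℝ) ≤ Real.exp (-t ^ 2 / (2 * v)) := (Real.exp_pos _).le
    have hmm : Real.exp (-t ^ 2 / (2 * v)) *
        max (Real.exp ((2 * c * t - c ^ 2) / (2 * v)) - Real.exp ε) 0 = max (W t) 0 := by
      rw [mul_comm, max_mul_of_nonneg _ _ hk, zero_mul, sub_mul, ← Real.exp_add]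
      have harg : (2 * c * t - c ^ 2) / (2 * v) + -t ^ 2 / (2 * v) = -(t - c) ^ 2 / (2 * v) := by
        field_simp
        ring
      rw [harg]
    rw [hmm]
    by_cases ht : t ∈ Set.Ioi b0
    · rw [Set.indicator_of_mem ht, max_eq_left]
      have ht' : b0 < t := ht
      rw [hb0def] at ht'
      have key : 2 * v * ε ≤ 2 * c * t - c ^ 2 := by
        have h2 : v * ε / c < t - c / 2 := by linarith
        have h3 : v * ε < (t - c / 2) * c := (div_lt_iff₀ hc).mp h2
        nlinarith
      have heq : -(t - c) ^ 2 / (2 * v) - (ε + -t ^ 2 / (2 * v))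
          = (2 * c * t - c ^ 2 - 2 * v * ε) / (2 * v) := by
        field_simp
        ring
      have : Real.exp ε * Real.exp (-t ^ 2 / (2 * v)) ≤ Real.exp (-(t - c) ^ 2 / (2 * v)) := by
        rw [← Real.exp_add, Real.exp_le_exp, ← sub_nonneg, heq]
        apply div_nonneg (by linarith) (by linarith)
      simpa [W, sub_nonneg] using this
    · rw [Set.indicator_of_notMem ht, max_eq_right]
      have ht' : t ≤ b0 := le_of_not_gt ht
      rw [hb0def] at ht'
      have key : 2 * c * t - c ^ 2 ≤ 2 * v * ε := by
        have h2 : t - c / 2 ≤ v * ε / c := by linarith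
        have h3 : (t - c / 2) * c ≤ v * ε := (le_div_iff₀ hc).mp h2
        nlinarith
      have heq : (ε + -t ^ 2 / (2 * v)) - -(t - c) ^ 2 / (2 * v)
          = (2 * v * ε - (2 * c * t - c ^ 2)) / (2 * v) := by
        field_simp
        ring
      have : Real.exp (-(t - c) ^ 2 / (2 * v)) ≤ Real.exp ε * Real.exp (-t ^ 2 / (2 * v)) := by
        rw [← Real.exp_add, Real.exp_le_exp, ← sub_nonneg, heq]
        apply div_nonneg (by linarith) (by linarith)
      simpa [W, sub_nonpos] using this
  rw [integral_congr_ae (Filter.Eventually.of_forall hpt), integral_indicator measurableSet_Ioi]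
  have hW1 : IntegrableOn (fun t : ℝ => Real.exp (-(t - c) ^ 2 / (2 * v))) (Set.Ioi b0) :=
    ((integrable_gauss_kernel hv).comp_sub_right c).integrableOn
  have hW2 : IntegrableOn (fun t : ℝ => Real.exp (-t ^ 2 / (2 * v))) (Set.Ioi b0) :=
    (integrable_gauss_kernel hv).integrableOn
  rw [hWdef]
  rw [integral_sub hW1 (hW2.const_mul _), MeasureTheory.integral_const_mul]
  have hshift : ∫ t in Set.Ioi b0, Real.exp (-(t - c) ^ 2 / (2 * v))
      = ∫ t in Set.Ioi (b0 - c), Real.exp (-t ^ 2 / (2 * v)) := by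
    rw [← integral_indicator measurableSet_Ioi, ← integral_indicator measurableSet_Ioi]
    have hind : ∀ t : ℝ, (Set.Ioi b0).indicator (fun t => Real.exp (-(t - c) ^ 2 / (2 * v))) t
        = (Set.Ioi (b0 - c)).indicator (fun t => Real.exp (-t ^ 2 / (2 * v))) (t - c) := by
      intro t
      by_cases ht : t ∈ Set.Ioi b0
      · rw [Set.indicator_of_mem ht, Set.indicator_of_mem]
        simp only [Set.mem_Ioi] at ht ⊢
        linarith
      · rw [Set.indicator_of_notMem ht, Set.indicator_of_notMem]
        simp only [Set.mem_Ioi] at ht ⊢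
        linarith
    rw [integral_congr_ae (Filter.Eventually.of_forall hind)]
    exact integral_sub_right_eq_self
      ((Set.Ioi (b0 - c)).indicator fun t => Real.exp (-t ^ 2 / (2 * v))) c
  rw [hshift, hvdef, integral_Ioi_gauss hσ, integral_Ioi_gauss hσ]
  have e1 : (b0 - c) / σ = ε / (c / σ) - (c / σ) / 2 := by
    rw [hb0def, hvdef]
    field_simp
    ring
  have e2 : b0 / σ = ε / (c / σ) + (c / σ) / 2 := by
    rw [hb0def, hvdef]
    field_simp
  rw [e1, e2, theta]
  ring

lemma integral_gauss_total {v : ℝ} (hv : 0 < v) :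
    ∫ t : ℝ, Real.exp (-t ^ 2 / (2 * v)) = Real.sqrt (2 * Real.pi * v) := by
  have h : (fun t : ℝ => Real.exp (-t ^ 2 / (2 * v)))
      = fun t : ℝ => Real.exp (-((2*v)⁻¹) * t ^ 2) := by
    funext t; ring_nf
  rw [h, integral_gaussian]
  congr 1
  rw [div_eq_mul_inv, inv_inv]
  ring

lemma const_collapse (n : ℕ) {σ : ℝ} (hσ : 0 < σ) :
    (2 * Real.pi * σ ^ 2) ^ (-(((n+1 : ℕ)) : ℝ) / 2) * Real.sqrt (2 * Real.pi * σ ^ 2) ^ n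
      * (σ * Real.sqrt (2 * Real.pi)) = 1 := by
  have hp : (0:ℝ) < 2 * Real.pi * σ ^ 2 := by positivity
  have h1 : σ * Real.sqrt (2 * Real.pi) = Real.sqrt (2 * Real.pi * σ ^ 2) := by
    rw [mul_comm (2 * Real.pi) (σ ^ 2), Real.sqrt_mul (sq_nonneg σ) (2 * Real.pi),
      Real.sqrt_sq hσ.le]
  rw [h1, Real.sqrt_eq_rpow, ← Real.rpow_natCast ((2 * Real.pi * σ ^ 2) ^ ((1:ℝ)/2)) n,
    ← Real.rpow_mul hp.le, ← Real.rpow_add hp, ← Real.rpow_add hp]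
  rw [show -(((n+1 : ℕ)) : ℝ) / 2 + 1 / 2 * (n : ℝ) + 1 / 2 = 0 by push_cast; ring]
  exact Real.rpow_zero _

lemma hockey_bound (ε : ℝ) (hε : 0 ≤ ε) (n : ℕ) (σ : ℝ) (hσ : 0 < σ)
    (μ1 μ2 : E (n+1)) (hne : 0 < ‖μ1 - μ2‖) :
    hockeyStick ε (gaussian (n+1) μ1 (σ ^ 2)) (gaussian (n+1) μ2 (σ ^ 2))
      ≤ theta ε (‖μ1 - μ2‖ / σ) := by
  have hv : (0:ℝ) < σ ^ 2 := by positivity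
  set v : ℝ := σ ^ 2 with hvdef
  set c : ℝ := ‖μ1 - μ2‖ with hcdef
  have hc : 0 < c := hne
  set Δ : E (n+1) := μ1 - μ2 with hΔdef
  set u : E (n+1) := c⁻¹ • Δ with hudef
  have hΔnorm : ‖Δ‖ = c := by rw [hΔdef, hcdef]
  have hu : ‖u‖ = 1 := by
    rw [hudef, norm_smul, hΔnorm, Real.norm_eq_abs, abs_of_nonneg (inv_nonneg.mpr hc.le)]
    field_simp
  set C : ℝ := (2 * Real.pi * v) ^ (-(((n+1 : ℕ)) : ℝ) / 2) with hCdef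
  have hC : 0 < C := Real.rpow_pos_of_pos (by positivity) _
  set f : E (n+1) → ℝ := fun x => C * Real.exp (-‖x - μ1‖ ^ 2 / (2 * v)) with hfdef
  set g : E (n+1) → ℝ := fun x => C * Real.exp (-‖x - μ2‖ ^ 2 / (2 * v)) with hgdef
  have hf : Integrable f := ((integrable_gauss_E (n+1) hv).comp_sub_right μ1).const_mul C
  have hg : Integrable g := ((integrable_gauss_E (n+1) hv).comp_sub_right μ2).const_mul C
  set h : ℝ → ℝ := fun t =>
    max (Real.exp ((2 * c * t - c ^ 2) / (2 * v)) - Real.exp ε) 0 with hhdef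
  have hpoint : ∀ x : E (n+1), max (f x - Real.exp ε * g x) 0
      = C * (Real.exp (-‖x - μ2‖ ^ 2 / (2 * v)) * h (inner ℝ (x - μ2) u : ℝ)) := by
    intro x
    have hinner : (inner ℝ (x - μ2) Δ : ℝ) = c * (inner ℝ (x - μ2) u : ℝ) := by
      rw [hudef, real_inner_smul_right]
      field_simp
    have hx1 : x - μ1 = (x - μ2) - Δ := by rw [hΔdef]; abel
    have hfx : f x = C * Real.exp (-‖x - μ2‖ ^ 2 / (2 * v))
        * Real.exp ((2 * c * (inner ℝ (x - μ2) u : ℝ) - c ^ 2) / (2 * v)) := by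
      rw [hfdef]
      simp only
      rw [hx1, mul_assoc, ← Real.exp_add]
      congr 2
      rw [norm_sub_sq_real, hinner, hΔnorm]
      field_simp
      ring
    have hgx : g x = C * Real.exp (-‖x - μ2‖ ^ 2 / (2 * v)) := rfl
    rw [hfx, hgx, hhdef]
    set k : ℝ := C * Real.exp (-‖x - μ2‖ ^ 2 / (2 * v)) with hkdef
    have hk : (0:ℝ) ≤ k := by positivity
    have h1 : k * Real.exp ((2 * c * (inner ℝ (x - μ2) u : ℝ) - c ^ 2) / (2 * v))
        - Real.exp ε * k
        = (Real.exp ((2 * c * (inner ℝ (x - μ2) u : ℝ) - c ^ 2) / (2 * v)) - Real.exp ε) * k := by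
      ring
    rw [h1]
    have h2 : max (Real.exp ((2 * c * (inner ℝ (x - μ2) u : ℝ) - c ^ 2) / (2 * v))
        - Real.exp ε) 0 * k
        = max ((Real.exp ((2 * c * (inner ℝ (x - μ2) u : ℝ) - c ^ 2) / (2 * v))
          - Real.exp ε) * k) 0 := by
      rw [max_mul_of_nonneg _ _ hk, zero_mul]
    rw [← h2, hkdef]
    dsimp only
    ring
  set S : ℝ := ∫ x : E (n+1), max (f x - Real.exp ε * g x) 0 with hSdef
  have hcard : Module.finrank ℝ (E (n+1)) = Fintype.card (Fin (n+1)) := by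
    simp [finrank_euclideanSpace_fin]
  have horth : Orthonormal ℝ (({0} : Set (Fin (n+1))).restrict (fun _ => u)) := by
    constructor
    · intro i; exact hu
    · intro i j hij
      exact absurd (Subtype.ext ((Set.mem_singleton_iff.mp i.2).trans
        (Set.mem_singleton_iff.mp j.2).symm)) hij
  obtain ⟨b, hb⟩ := horth.exists_orthonormalBasis_extension_of_card_eq hcard
  have hb0 : b 0 = u := hb 0 (Set.mem_singleton 0)
  have hS : S = theta ε (c / σ) := by
    rw [hSdef]
    calc ∫ x : E (n+1), max (f x - Real.exp ε * g x) 0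
        = ∫ x : E (n+1), C * (Real.exp (-‖x - μ2‖ ^ 2 / (2 * v)) * h (inner ℝ (x - μ2) u : ℝ)) :=
          integral_congr_ae (Filter.Eventually.of_forall hpoint)
      _ = C * ∫ x : E (n+1), Real.exp (-‖x - μ2‖ ^ 2 / (2 * v)) * h (inner ℝ (x - μ2) u : ℝ) :=
          integral_const_mul _ _
      _ = C * ∫ y : E (n+1), Real.exp (-‖y‖ ^ 2 / (2 * v)) * h (inner ℝ y u : ℝ) := by
          congr 1
          exact integral_sub_right_eq_self
            (fun y : E (n+1) => Real.exp (-‖y‖ ^ 2 / (2 * v)) * h (inner ℝ y u : ℝ)) μ2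
      _ = C * ((∫ t : ℝ, Real.exp (-t ^ 2 / (2 * v))) ^ n
            * ∫ t : ℝ, Real.exp (-t ^ 2 / (2 * v)) * h t) := by
          rw [← hb0]
          exact congrArg _ (integral_gauss_inner n hv b h)
      _ = theta ε (c / σ) := by
          rw [integral_gauss_total hv, hhdef, hvdef, one_dim_integral ε hε hσ hc]
          calc C * (Real.sqrt (2 * Real.pi * σ ^ 2) ^ n
                * (σ * Real.sqrt (2 * Real.pi) * theta ε (c / σ)))
              = (C * Real.sqrt (2 * Real.pi * σ ^ 2) ^ n * (σ * Real.sqrt (2 * Real.pi)))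
                * theta ε (c / σ) := by ring
            _ = theta ε (c / σ) := by rw [hCdef, hvdef, const_collapse n hσ, one_mul]
  have hmaxint : Integrable (fun x => max (f x - Real.exp ε * g x) 0) :=
    (hf.sub (hg.const_mul _)).pos_part
  have key : ∀ A : Set (E (n+1)), MeasurableSet A →
      ((gaussian (n+1) μ1 v) A).toReal - Real.exp ε * ((gaussian (n+1) μ2 v) A).toReal ≤ S := by
    intro A hA
    have hμA : ((gaussian (n+1) μ1 v) A).toReal = ∫ x in A, f x := by
      rw [gaussian, withDensity_apply _ hA,
        ← ofReal_integral_eq_lintegral_ofReal hf.integrableOn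
          (Filter.Eventually.of_forall fun x => by positivity),
        ENNReal.toReal_ofReal (setIntegral_nonneg hA fun x _ => by positivity)]
    have hνA : ((gaussian (n+1) μ2 v) A).toReal = ∫ x in A, g x := by
      rw [gaussian, withDensity_apply _ hA,
        ← ofReal_integral_eq_lintegral_ofReal hg.integrableOn
          (Filter.Eventually.of_forall fun x => by positivity),
        ENNReal.toReal_ofReal (setIntegral_nonneg hA fun x _ => by positivity)]
    rw [hμA, hνA]
    have h1 : ∫ x in A, (f x - Real.exp ε * g x)
        = (∫ x in A, f x) - Real.exp ε * ∫ x in A, g x := by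
      rw [integral_sub hf.integrableOn ((hg.integrableOn).const_mul _)]
      congr 1
      exact integral_const_mul _ _
    have h2 : ∫ x in A, (f x - Real.exp ε * g x)
        ≤ ∫ x in A, max (f x - Real.exp ε * g x) 0 :=
      setIntegral_mono_on ((hf.sub (hg.const_mul _)).integrableOn)
        (hmaxint.integrableOn) hA (fun x _ => le_max_left _ _)
    have h3 : ∫ x in A, max (f x - Real.exp ε * g x) 0 ≤ S :=
      setIntegral_le_integral hmaxint (Filter.Eventually.of_forall fun x => le_max_right _ _)
    linarith
  haveI : Nonempty {s : Set (E (n+1)) // MeasurableSet s} := ⟨⟨∅, MeasurableSet.empty⟩⟩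
  rw [← hS]
  exact ciSup_le fun A => key A.1 A.2

end Helpers

/-- `r ↦ θ_ε(r)` is nondecreasing on `(0, ∞)`; consequently, Gaussians with means at
distance at most `D` have hockey-stick divergence at most `θ_ε(D/σ)`. -/
theorem stmt15 (ε : ℝ) (hε : 0 ≤ ε) :
    MonotoneOn (fun r => theta ε r) (Set.Ioi (0 : ℝ))
      ∧
    ∀ (d : ℕ), 1 ≤ d → ∀ (σ D : ℝ), 0 < σ → 0 < D → ∀ μ1 μ2 : E d,
      0 < ‖μ1 - μ2‖ → ‖μ1 - μ2‖ ≤ D →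
      hockeyStick ε (gaussian d μ1 (σ ^ 2)) (gaussian d μ2 (σ ^ 2)) ≤ theta ε (D / σ) := by
  constructor
  · exact theta_monotone ε
  · intro d hd σ D hσ hD μ1 μ2 hpos hle
    obtain ⟨n, rfl⟩ : ∃ n, d = n + 1 := ⟨d - 1, (Nat.succ_pred_eq_of_pos hd).symm⟩
    refine (hockey_bound ε hε n σ hσ μ1 μ2 hpos).trans ?_
    have h1 : ‖μ1 - μ2‖ / σ ∈ Set.Ioi (0:ℝ) := Set.mem_Ioi.mpr (by positivity)
    have h2 : D / σ ∈ Set.Ioi (0:ℝ) := Set.mem_Ioi.mpr (by positivity)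
    exact theta_monotone ε h1 h2 (by gcongr)
end
end

section
/- Let ε > 0 and r > 0. Then the quantity θ_ε(r) := Q(ε/r − r/2) − e^ε Q(ε/r + r/2) satisfies 0 < θ_ε(r) < 1. -/
open MeasureTheory Real Finset ENNReal

noncomputable section

lemma gexp_integrable : MeasureTheory.Integrable (fun u : ℝ => Real.exp (-u ^ 2 / 2)) := by
  have : (fun u : ℝ => Real.exp (-u ^ 2 / 2)) = fun u : ℝ => Real.exp (-(1/2) * u ^ 2) := by
    funext u; ring_nf
  rw [this]
  exact integrable_exp_neg_mul_sq (by norm_num)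

lemma gexp_integral_pos (t : ℝ) : 0 < ∫ u in Set.Ioi t, Real.exp (-u ^ 2 / 2) := by
  rw [setIntegral_pos_iff_support_of_nonneg_ae
    (Filter.Eventually.of_forall fun u => (Real.exp_pos _).le)
    gexp_integrable.integrableOn]
  have hs : Function.support (fun u : ℝ => Real.exp (-u ^ 2 / 2)) = Set.univ := by
    ext u; simp [Function.mem_support, Real.exp_ne_zero]
  rw [hs, Set.univ_inter]
  simp [Real.volume_Ioi]

lemma gaussQ_pos (t : ℝ) : 0 < gaussQ t := by
  have h2 : (0:ℝ) < Real.sqrt (2 * Real.pi) := Real.sqrt_pos.mpr (by positivity)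
  exact mul_pos (inv_pos.mpr h2) (gexp_integral_pos t)

lemma gexp_total : ∫ u : ℝ, Real.exp (-u ^ 2 / 2) = Real.sqrt (2 * Real.pi) := by
  have : (fun u : ℝ => Real.exp (-u ^ 2 / 2)) = fun u : ℝ => Real.exp (-(1/2) * u ^ 2) := by
    funext u; ring_nf
  rw [this, integral_gaussian]
  rw [show Real.pi / (1/2) = 2 * Real.pi by ring]

lemma gaussQ_lt_one (t : ℝ) : gaussQ t < 1 := by
  have h2 : (0:ℝ) < Real.sqrt (2 * Real.pi) := Real.sqrt_pos.mpr (by positivity)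
  have hsplit : (∫ u in Set.Iic t, Real.exp (-u ^ 2 / 2))
      + ∫ u in Set.Ioi t, Real.exp (-u ^ 2 / 2) = Real.sqrt (2 * Real.pi) := by
    rw [← gexp_total, ← MeasureTheory.integral_add_compl (measurableSet_Iic (a := t))
      gexp_integrable]
    congr 1
    · congr 1
      simp [Set.compl_Iic]
  have hIic : 0 < ∫ u in Set.Iic t, Real.exp (-u ^ 2 / 2) := by
    rw [setIntegral_pos_iff_support_of_nonneg_ae
      (Filter.Eventually.of_forall fun u => (Real.exp_pos _).le)
      gexp_integrable.integrableOn]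
    have hs : Function.support (fun u : ℝ => Real.exp (-u ^ 2 / 2)) = Set.univ := by
      ext u; simp [Function.mem_support, Real.exp_ne_zero]
    rw [hs, Set.univ_inter]
    simp [Real.volume_Iic]
  have hlt : (∫ u in Set.Ioi t, Real.exp (-u ^ 2 / 2)) < Real.sqrt (2 * Real.pi) := by
    linarith
  unfold gaussQ
  rw [inv_mul_lt_iff₀ h2, mul_one]
  exact hlt

/-- The amplification factor satisfies `0 < θ_ε(r) < 1` for `ε > 0` and `r > 0`. -/
theorem stmt17 (ε r : ℝ) (hε : 0 < ε) (hr : 0 < r) :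
    0 < theta ε r ∧ theta ε r < 1 := by
  set a := ε / r - r / 2 with ha
  set b := ε / r + r / 2 with hb
  have hab : b = a + r := by rw [ha, hb]; ring
  have har : a * r = ε - r ^ 2 / 2 := by rw [ha]; field_simp
  clear_value a b
  constructor
  · -- lower bound
    have h2 : (0:ℝ) < Real.sqrt (2 * Real.pi) := Real.sqrt_pos.mpr (by positivity)
    -- substitution
    have hshift : MeasureTheory.Integrable (fun w : ℝ => Real.exp (-(w + r) ^ 2 / 2)) := by
      have := ((measurePreserving_add_right volume r).integrable_comp
        gexp_integrable.1).mpr gexp_integrable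
      exact this
    have hsub : (∫ u in Set.Ioi b, Real.exp (-u ^ 2 / 2))
        = ∫ w in Set.Ioi a, Real.exp (-(w + r) ^ 2 / 2) := by
      rw [← MeasureTheory.integral_indicator (measurableSet_Ioi),
          ← MeasureTheory.integral_indicator (measurableSet_Ioi)]
      rw [← MeasureTheory.integral_add_right_eq_self
        (fun x : ℝ => (Set.Ioi b).indicator (fun u => Real.exp (-u ^ 2 / 2)) x) r]
      congr 1
      funext x
      simp only [Set.indicator_apply, Set.mem_Ioi, hab]
      by_cases hx : a < x
      · rw [if_pos (by linarith), if_pos hx]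
      · rw [if_neg (fun h => hx (by linarith)), if_neg hx]
    have hdiffpos : 0 < ∫ w in Set.Ioi a,
        (Real.exp (-w ^ 2 / 2) - Real.exp ε * Real.exp (-(w + r) ^ 2 / 2)) := by
      rw [setIntegral_pos_iff_support_of_nonneg_ae]
      · have hsub2 : Set.Ioi a ⊆ Function.support (fun w : ℝ =>
            Real.exp (-w ^ 2 / 2) - Real.exp ε * Real.exp (-(w + r) ^ 2 / 2)) ∩ Set.Ioi a := by
          intro w hw
          have hwa : a < w := hw
          have key : Real.exp ε * Real.exp (-(w + r) ^ 2 / 2) < Real.exp (-w ^ 2 / 2) := by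
            rw [← Real.exp_add]
            apply Real.exp_lt_exp.mpr
            have : ε + -(w + r) ^ 2 / 2 - (-w ^ 2 / 2) = ε - w * r - r ^ 2 / 2 := by ring
            have haw : a * r < w * r := mul_lt_mul_of_pos_right hwa hr
            linarith
          refine ⟨?_, hw⟩
          simp only [Function.mem_support]
          intro hzero
          have := sub_eq_zero.mp hzero
          linarith
        refine lt_of_lt_of_le ?_ (measure_mono hsub2)
        simp [Real.volume_Ioi]
      · filter_upwards [MeasureTheory.ae_restrict_mem measurableSet_Ioi] with w hw
        simp only [Pi.zero_apply]
        rw [sub_nonneg]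
        have hwa : a < w := hw
        have key : Real.exp ε * Real.exp (-(w + r) ^ 2 / 2) ≤ Real.exp (-w ^ 2 / 2) := by
          rw [← Real.exp_add]
          apply Real.exp_le_exp.mpr
          have haw : a * r < w * r := mul_lt_mul_of_pos_right hwa hr
          have hx : ε + -(w + r) ^ 2 / 2 - (-w ^ 2 / 2) = ε - w * r - r ^ 2 / 2 := by ring
          linarith
        linarith
      · exact (gexp_integrable.integrableOn).sub
          ((hshift.const_mul (Real.exp ε)).integrableOn)
    rw [MeasureTheory.integral_sub gexp_integrable.integrableOn
      ((hshift.const_mul (Real.exp ε)).integrableOn)] at hdiffpos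
    rw [MeasureTheory.integral_const_mul] at hdiffpos
    unfold theta gaussQ
    rw [← hb, ← ha, hsub]
    have : (Real.sqrt (2 * Real.pi))⁻¹ * (∫ w in Set.Ioi a, Real.exp (-w ^ 2 / 2))
        - Real.exp ε * ((Real.sqrt (2 * Real.pi))⁻¹ * ∫ w in Set.Ioi a, Real.exp (-(w + r) ^ 2 / 2))
        = (Real.sqrt (2 * Real.pi))⁻¹ * ((∫ w in Set.Ioi a, Real.exp (-w ^ 2 / 2))
          - Real.exp ε * ∫ w in Set.Ioi a, Real.exp (-(w + r) ^ 2 / 2)) := by ring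
    rw [this]
    positivity
  · -- upper bound
    unfold theta
    have h1 : gaussQ (ε / r - r / 2) < 1 := gaussQ_lt_one _
    have h2 : 0 < Real.exp ε * gaussQ (ε / r + r / 2) :=
      mul_pos (Real.exp_pos _) (gaussQ_pos _)
    linarith
end
end
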